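/- arXiv:0909.1041 — 2 statements merged into one kernel-verified Lean document; each statement's English description precedes it below -/
import Mathlib

section
/- Let h be a real-valued harmonic function on the open unit disc D in the complex plane, continuous on the closed disc. If h(0) ≤ log ε for some ε ∈ (0,1), h ≤ log 2 on the unit circle, and h(r) ≥ 0 for some r ∈ (0,1), then log(1/ε) ≤ ((1+r)/(1-r))² · log 2. -/
/-!
Write `f` for the boundary values of `h`. Harnack's bounds `(1-r)/(1+r) ≤ P_r ≤ (1+r)/(1-r)` on
the Poisson kernel turn `0 ≤ h(r) = (1/2π) ∫ P_r f` into `∫ f⁻ ≤ ((1+r)/(1-r))² ∫ f⁺`, while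
`f ≤ log 2` gives `∫ f⁺ ≤ 2π log 2`. The mean value property then bounds
`-log ε ≤ -h(0) = (1/2π) (∫ f⁻ - ∫ f⁺)` by `(((1+r)/(1-r))² - 1) log 2`.
-/

open MeasureTheory

section WeightedIntegral

variable {α : Type*} [MeasurableSpace α] {μ : Measure α} {f w : α → ℝ} {m M : ℝ}

lemma MeasureTheory.Integrable.posPart (hf : Integrable f μ) : Integrable (fun x => (f x)⁺) μ :=
  hf.pos_part

lemma MeasureTheory.Integrable.negPart (hf : Integrable f μ) : Integrable (fun x => (f x)⁻) μ :=
  hf.neg_part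

lemma mul_le_mul_posPart_sub_mul_negPart {x w m M : ℝ} (hw : w ∈ Set.Icc m M) :
    w * x ≤ M * x⁺ - m * x⁻ := by
  rcases le_total 0 x with hx | hx
  · rw [posPart_eq_self.mpr hx, negPart_eq_zero.mpr hx]
    nlinarith [hw.2]
  · rw [posPart_eq_zero.mpr hx, negPart_eq_neg.mpr hx]
    nlinarith [hw.1]

lemma integral_mul_le_posPart_sub_negPart (hf : Integrable f μ) (hw : AEStronglyMeasurable w μ)
    (hwb : ∀ᵐ x ∂μ, w x ∈ Set.Icc m M) :
    ∫ x, w x * f x ∂μ ≤ M * ∫ x, (f x)⁺ ∂μ - m * ∫ x, (f x)⁻ ∂μ := by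
  have hwf : Integrable (fun x => w x * f x) μ :=
    hf.bdd_mul hw (hwb.mono fun x hx => abs_le_max_abs_abs hx.1 hx.2)
  have hpos : Integrable (fun x => M * (f x)⁺) μ := hf.posPart.const_mul M
  have hneg : Integrable (fun x => m * (f x)⁻) μ := hf.negPart.const_mul m
  rw [← integral_const_mul, ← integral_const_mul, ← integral_sub hpos hneg]
  exact integral_mono_ae hwf (hpos.sub hneg)
    (hwb.mono fun x hx => mul_le_mul_posPart_sub_mul_negPart hx)

lemma neg_integral_le_of_integral_mul_nonneg (hf : Integrable f μ)
    (hw : AEStronglyMeasurable w μ) (hwb : ∀ᵐ x ∂μ, w x ∈ Set.Icc m M) (hm : 0 < m)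
    (hwf : 0 ≤ ∫ x, w x * f x ∂μ) :
    -∫ x, f x ∂μ ≤ (M / m - 1) * ∫ x, (f x)⁺ ∂μ := by
  have hmass := integral_mul_le_posPart_sub_negPart hf hw hwb
  have hneg : ∫ x, (f x)⁻ ∂μ ≤ M / m * ∫ x, (f x)⁺ ∂μ := by
    rw [div_mul_eq_mul_div, le_div_iff₀ hm]
    linarith
  have hsplit : ∫ x, f x ∂μ = ∫ x, (f x)⁺ ∂μ - ∫ x, (f x)⁻ ∂μ := by
    rw [← integral_sub hf.posPart hf.negPart]
    simp only [posPart_sub_negPart]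
  linarith

lemma integral_posPart_le_of_le [IsFiniteMeasure μ] {c : ℝ} (hf : Integrable f μ)
    (hfc : ∀ᵐ x ∂μ, f x ≤ c) (hc : 0 ≤ c) :
    ∫ x, (f x)⁺ ∂μ ≤ μ.real Set.univ * c := by
  rw [← smul_eq_mul, ← MeasureTheory.integral_const]
  exact integral_mono_ae hf.posPart (integrable_const c)
    (hfc.mono fun x hx => max_le hx hc)

end WeightedIntegral

lemma poissonKernel_mem_Icc {r : ℝ} (θ : ℝ) (hr0 : 0 ≤ r) (hr1 : r < 1) :
    (1 - r ^ 2) / (1 - 2 * r * Real.cos θ + r ^ 2) ∈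
      Set.Icc ((1 - r) / (1 + r)) ((1 + r) / (1 - r)) := by
  have hD : 0 < 1 - 2 * r * Real.cos θ + r ^ 2 := by
    nlinarith [Real.cos_le_one θ, sq_nonneg (1 - r)]
  constructor
  · rw [div_le_div_iff₀ (by linarith) hD]
    nlinarith [mul_nonneg (mul_nonneg (by linarith : 0 ≤ 1 - r) hr0)
      (by linarith [Real.neg_one_le_cos θ] : 0 ≤ 1 + Real.cos θ)]
  · rw [div_le_div_iff₀ hD (by linarith)]
    nlinarith [mul_nonneg (mul_nonneg (by linarith : 0 ≤ 1 + r) hr0)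
      (sub_nonneg.mpr (Real.cos_le_one θ))]

open Real Complex intervalIntegral

theorem stmt_0_general (h : ℂ → ℝ) (ε r : ℝ)
    (hr : r ∈ Set.Ioo (0 : ℝ) 1)
    (hint : IntervalIntegrable (fun θ : ℝ => h (Complex.exp (θ * Complex.I)))
      MeasureTheory.volume 0 (2 * π))
    (hmean : h 0 = (2 * π)⁻¹ * ∫ θ in (0 : ℝ)..2 * π, h (Complex.exp (θ * Complex.I)))
    (hpoisson : h (r : ℂ) = (2 * π)⁻¹ * ∫ θ in (0 : ℝ)..2 * π,
      ((1 - r ^ 2) / (1 - 2 * r * Real.cos θ + r ^ 2)) * h (Complex.exp (θ * Complex.I)))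
    (h0 : h 0 ≤ Real.log ε)
    (hbd : ∀ θ : ℝ, h (Complex.exp (θ * Complex.I)) ≤ Real.log 2)
    (hrpos : 0 ≤ h (r : ℂ)) :
    Real.log (1 / ε) ≤ ((1 + r) / (1 - r)) ^ 2 * Real.log 2 := by
  obtain ⟨hr0, hr1⟩ := hr
  set f : ℝ → ℝ := fun θ => h (Complex.exp (θ * Complex.I))
  set μ := volume.restrict (Set.Ioc 0 (2 * π))
  have hπ : 0 ≤ 2 * π := by positivity
  have hf : Integrable f μ := (intervalIntegrable_iff_integrableOn_Ioc_of_le hπ).mp hint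
  have hμ : μ.real Set.univ = 2 * π := by simp [μ, hπ]
  have hlog2 : 0 ≤ Real.log 2 := Real.log_nonneg one_le_two
  have hwf : 0 ≤ ∫ θ, (1 - r ^ 2) / (1 - 2 * r * Real.cos θ + r ^ 2) * f θ ∂μ := by
    rw [hpoisson, integral_of_le hπ] at hrpos
    exact nonneg_of_mul_nonneg_right hrpos (by positivity)
  have hneg := neg_integral_le_of_integral_mul_nonneg hf
    (by fun_prop : Measurable _).aestronglyMeasurable
    (ae_of_all _ fun θ => poissonKernel_mem_Icc θ hr0.le hr1)
    (div_pos (by linarith) (by linarith)) hwf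
  have hpos := integral_posPart_le_of_le hf (ae_of_all _ hbd) hlog2
  have hratio : (1 + r) / (1 - r) / ((1 - r) / (1 + r)) = ((1 + r) / (1 - r)) ^ 2 := by
    field_simp
  have hM : 1 ≤ ((1 + r) / (1 - r)) ^ 2 :=
    one_le_pow₀ ((one_le_div₀ (by linarith)).mpr (by linarith))
  have hmean' : h 0 = (2 * π)⁻¹ * ∫ θ, f θ ∂μ := by rw [hmean, integral_of_le hπ]
  rw [hratio] at hneg
  rw [hμ] at hpos
  calc Real.log (1 / ε) = -Real.log ε := by rw [one_div, Real.log_inv]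
    _ ≤ (2 * π)⁻¹ * -∫ θ, f θ ∂μ := by rw [mul_neg, ← hmean']; linarith
    _ ≤ (2 * π)⁻¹ * ((((1 + r) / (1 - r)) ^ 2 - 1) * (2 * π * Real.log 2)) := by
      gcongr
      exact hneg.trans (mul_le_mul_of_nonneg_left hpos (by linarith))
    _ = (((1 + r) / (1 - r)) ^ 2 - 1) * Real.log 2 := by field_simp
    _ ≤ ((1 + r) / (1 - r)) ^ 2 * Real.log 2 := by linarith

/-- Let h be a real-valued harmonic function on the unit disc, continuous on the closed disc;
its harmonicity is encoded by the mean value property at 0 and the Poisson integral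
representation at r.  If h(0) ≤ log ε with ε ∈ (0,1), h ≤ log 2 on the unit circle, and
h(r) ≥ 0 for some r ∈ (0,1), then log(1/ε) ≤ ((1+r)/(1-r))² · log 2. -/
theorem stmt_0 (h : ℂ → ℝ) (ε r : ℝ) (hε : ε ∈ Set.Ioo (0 : ℝ) 1)
    (hr : r ∈ Set.Ioo (0 : ℝ) 1)
    (hcont : ContinuousOn h (Metric.closedBall (0 : ℂ) 1))
    (hint : IntervalIntegrable (fun θ : ℝ => h (Complex.exp (θ * Complex.I)))
      MeasureTheory.volume 0 (2 * π))
    (hmean : h 0 = (2 * π)⁻¹ * ∫ θ in (0 : ℝ)..2 * π, h (Complex.exp (θ * Complex.I)))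
    (hpoisson : h (r : ℂ) = (2 * π)⁻¹ * ∫ θ in (0 : ℝ)..2 * π,
      ((1 - r ^ 2) / (1 - 2 * r * Real.cos θ + r ^ 2)) * h (Complex.exp (θ * Complex.I)))
    (h0 : h 0 ≤ Real.log ε)
    (hbd : ∀ θ : ℝ, h (Complex.exp (θ * Complex.I)) ≤ Real.log 2)
    (hrpos : 0 ≤ h (r : ℂ)) :
    Real.log (1 / ε) ≤ ((1 + r) / (1 - r)) ^ 2 * Real.log 2 :=
  stmt_0_general h ε r hr hint hmean hpoisson h0 hbd hrpos
end

section
/- Let E = {(z₁,z₂) ∈ ℂ² : |z₁|² + K|z₂|^{2m} < 1} with K > 0 and m a positive integer. For α ∈ (−1,1) real and z = (α, 0) ∈ E, the map ψ(ζ₁,ζ₂) = K^{1/2m}(1 − α²)^{1/2m} ζ₂ / (1 − αζ₁)^{1/m} is a well-defined holomorphic map from E into the unit disc D satisfying ψ(z) = 0, hence it is a candidate for the Carathéodory metric at z in the tangential direction (0,1), giving F_C^E(z,(0,1)) ≥ |∂ψ/∂ζ₂(z)| = K^{1/2m}(1 − α²)^{1/2m}/(1 − α²)^{1/m}. -/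
open Set Metric

/-- The open unit disc in ℂ. -/
noncomputable def unitDisc : Set ℂ := Metric.ball (0 : ℂ) 1

/-- The infinitesimal Kobayashi metric of a domain Ω ⊆ ℂ². -/
noncomputable def kobMetric2 (Ω : Set (ℂ × ℂ)) (z ξ : ℂ × ℂ) : ℝ :=
  sInf {α : ℝ | 0 < α ∧ ∃ f : ℂ → ℂ × ℂ,
    DifferentiableOn ℂ f unitDisc ∧ MapsTo f unitDisc Ω ∧ f 0 = z ∧ deriv f 0 = α⁻¹ • ξ}

/-- The infinitesimal Carathéodory metric of a domain Ω ⊆ ℂ². -/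
noncomputable def caraMetric2 (Ω : Set (ℂ × ℂ)) (z ξ : ℂ × ℂ) : ℝ :=
  sSup {c : ℝ | ∃ g : ℂ × ℂ → ℂ,
    DifferentiableOn ℂ g Ω ∧ MapsTo g Ω unitDisc ∧ g z = 0 ∧
      c = ‖fderiv ℂ g z ξ‖}

/-- The ellipsoid E = {|z₁|² + K|z₂|^{2m} < 1}. -/
def ellipsoidK (K : ℝ) (m : ℕ) : Set (ℂ × ℂ) :=
  {p : ℂ × ℂ | ‖p.1‖ ^ 2 + K * ‖p.2‖ ^ (2 * m) < 1}

/-- The tangential candidate map ψ(ζ₁,ζ₂) = K^{1/2m}(1−α²)^{1/2m} ζ₂/(1−αζ₁)^{1/m}. -/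
noncomputable def tangCand (K : ℝ) (m : ℕ) (α : ℝ) (ζ : ℂ × ℂ) : ℂ :=
  ((K ^ ((2 * (m : ℝ))⁻¹) * (1 - α ^ 2) ^ ((2 * (m : ℝ))⁻¹) : ℝ) : ℂ) * ζ.2 /
    (1 - (α : ℂ) * ζ.1) ^ ((m : ℂ)⁻¹)

/-- ψ is a well-defined holomorphic map of E into the unit disc with ψ(α,0) = 0, and its
tangential derivative there gives the lower bound
F_C^E((α,0),(0,1)) ≥ K^{1/2m}(1−α²)^{1/2m}/(1−α²)^{1/m}. -/
theorem stmt_11 (K : ℝ) (hK : 0 < K) (m : ℕ) (hm : 1 ≤ m) (α : ℝ)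
    (hα : α ∈ Set.Ioo (-1 : ℝ) 1) :
    MapsTo (tangCand K m α) (ellipsoidK K m) unitDisc ∧
    DifferentiableOn ℂ (tangCand K m α) (ellipsoidK K m) ∧
    tangCand K m α ((α : ℂ), 0) = 0 ∧
    ‖fderiv ℂ (tangCand K m α) ((α : ℂ), 0) (0, 1)‖ =
      K ^ ((2 * (m : ℝ))⁻¹) * (1 - α ^ 2) ^ ((2 * (m : ℝ))⁻¹) / (1 - α ^ 2) ^ ((m : ℝ)⁻¹) ∧
    K ^ ((2 * (m : ℝ))⁻¹) * (1 - α ^ 2) ^ ((2 * (m : ℝ))⁻¹) / (1 - α ^ 2) ^ ((m : ℝ)⁻¹) ≤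
      caraMetric2 (ellipsoidK K m) ((α : ℂ), 0) (0, 1) := by
  obtain ⟨hα1, hα2⟩ := hα
  have hα2' : α ^ 2 < 1 := by nlinarith
  have h1a : (0 : ℝ) < 1 - α ^ 2 := by linarith
  have hm0 : (0 : ℝ) < (m : ℝ) := by exact_mod_cast hm
  have h2m0 : 2 * m ≠ 0 := by omega
  set C : ℝ := K ^ ((2 * (m : ℝ))⁻¹) * (1 - α ^ 2) ^ ((2 * (m : ℝ))⁻¹) with hCdef
  have hCpos : 0 < C := mul_pos (Real.rpow_pos_of_pos hK _) (Real.rpow_pos_of_pos h1a _)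
  -- rpow gymnastics
  have key : ∀ x : ℝ, 0 ≤ x → (x ^ ((2 * (m : ℝ))⁻¹)) ^ (2 * m) = x := by
    intro x hx
    rw [← Real.rpow_natCast (x ^ ((2 * (m : ℝ))⁻¹)) (2 * m), ← Real.rpow_mul hx,
      show ((2 * m : ℕ) : ℝ) = 2 * (m : ℝ) by push_cast; ring,
      inv_mul_cancel₀ (by positivity), Real.rpow_one]
  have keyA : ∀ x : ℝ, 0 ≤ x → (x ^ ((m : ℝ)⁻¹)) ^ (2 * m) = x ^ 2 := by
    intro x hx
    rw [← Real.rpow_natCast (x ^ ((m : ℝ)⁻¹)) (2 * m), ← Real.rpow_mul hx,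
      show (m : ℝ)⁻¹ * ((2 * m : ℕ) : ℝ) = 2 by push_cast; field_simp]
    rw [show (2 : ℝ) = ((2 : ℕ) : ℝ) by norm_num, Real.rpow_natCast]
  have hC2m : C ^ (2 * m) = K * (1 - α ^ 2) := by
    rw [hCdef, mul_pow, key K hK.le, key _ h1a.le]
  -- facts about points in the ellipsoid
  have hz1lt : ∀ ζ : ℂ × ℂ, ζ ∈ ellipsoidK K m → ‖ζ.1‖ < 1 := by
    intro ζ hζ
    have hζ' : ‖ζ.1‖ ^ 2 + K * ‖ζ.2‖ ^ (2 * m) < 1 := hζ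
    nlinarith [norm_nonneg ζ.1, norm_nonneg ζ.2,
      pow_nonneg (norm_nonneg ζ.2) (2 * m), hK.le,
      mul_nonneg hK.le (pow_nonneg (norm_nonneg ζ.2) (2 * m))]
  have hre : ∀ ζ₁ : ℂ, ‖ζ₁‖ < 1 → 0 < (1 - (α : ℂ) * ζ₁).re := by
    intro ζ₁ h
    have h1 : ((α : ℂ) * ζ₁).re ≤ |((α : ℂ) * ζ₁).re| := le_abs_self _
    have h2 : |((α : ℂ) * ζ₁).re| ≤ ‖(α : ℂ) * ζ₁‖ := Complex.abs_re_le_norm _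
    have h3 : ‖(α : ℂ) * ζ₁‖ = |α| * ‖ζ₁‖ := by
      rw [norm_mul, Complex.norm_real, Real.norm_eq_abs]
    have h4 : |α| < 1 := abs_lt.mpr ⟨hα1, hα2⟩
    have h5 : |α| * ‖ζ₁‖ < 1 := by
      nlinarith [abs_nonneg α, norm_nonneg ζ₁]
    have : (1 - (α : ℂ) * ζ₁).re = 1 - ((α : ℂ) * ζ₁).re := by simp
    rw [this]
    linarith [h3 ▸ h2]
  have hb0 : ∀ ζ₁ : ℂ, ‖ζ₁‖ < 1 → (1 - (α : ℂ) * ζ₁) ≠ 0 := by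
    intro ζ₁ h hz
    have := hre ζ₁ h
    rw [hz] at this
    simp at this
  have hmc : ((m : ℂ))⁻¹ = (((m : ℝ)⁻¹ : ℝ) : ℂ) := by push_cast; ring
  -- |ψ(ζ)|
  have habs : ∀ ζ : ℂ × ℂ, ‖ζ.1‖ < 1 →
      ‖tangCand K m α ζ‖
        = C * ‖ζ.2‖ / ‖1 - (α : ℂ) * ζ.1‖ ^ ((m : ℝ)⁻¹) := by
    intro ζ h
    rw [tangCand, norm_div, norm_mul, Complex.norm_real, Real.norm_eq_abs,
      Complex.norm_cpow_of_ne_zero (hb0 ζ.1 h), hmc]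
    simp only [Complex.ofReal_re, Complex.ofReal_im, mul_zero, Real.exp_zero, div_one,
      ← hCdef, abs_of_pos hCpos]
  -- MapsTo
  have hmaps : MapsTo (tangCand K m α) (ellipsoidK K m) unitDisc := by
    intro ζ hζ
    have h1 : ‖ζ.1‖ < 1 := hz1lt ζ hζ
    have hζ' : ‖ζ.1‖ ^ 2 + K * ‖ζ.2‖ ^ (2 * m) < 1 := hζ
    set A : ℝ := ‖1 - (α : ℂ) * ζ.1‖ with hAdef
    have hApos : 0 < A := norm_pos_iff.mpr (hb0 ζ.1 h1)
    have hAineq : (1 - α ^ 2) * (1 - ‖ζ.1‖ ^ 2) ≤ A ^ 2 := by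
      have e1 : A ^ 2 = Complex.normSq (1 - (α : ℂ) * ζ.1) := Complex.sq_norm _
      have e2 : ‖ζ.1‖ ^ 2 = ζ.1.re * ζ.1.re + ζ.1.im * ζ.1.im := by
        rw [Complex.sq_norm, Complex.normSq_apply]
      rw [e1, Complex.normSq_apply, e2]
      simp only [Complex.sub_re, Complex.one_re, Complex.mul_re, Complex.ofReal_re,
        Complex.ofReal_im, Complex.sub_im, Complex.one_im, Complex.mul_im]
      nlinarith [sq_nonneg (ζ.1.re - α), sq_nonneg ζ.1.im]
    have hmain : ‖tangCand K m α ζ‖ ^ (2 * m) < 1 := by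
      rw [habs ζ h1, div_pow, mul_pow, hC2m, keyA A hApos.le]
      rw [div_lt_one (by positivity)]
      have ht : K * ‖ζ.2‖ ^ (2 * m) < 1 - ‖ζ.1‖ ^ 2 := by linarith
      nlinarith [mul_lt_mul_of_pos_left ht h1a]
    have : ‖tangCand K m α ζ‖ < 1 := by
      by_contra hcon
      push_neg at hcon
      exact absurd hmain (not_lt.mpr (one_le_pow₀ hcon))
    simpa [unitDisc, mem_ball_zero_iff] using this
  -- differentiability
  have hdiffAt : ∀ ζ : ℂ × ℂ, ‖ζ.1‖ < 1 →
      DifferentiableAt ℂ (tangCand K m α) ζ := by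
    intro ζ h
    have hfun : tangCand K m α = fun ζ : ℂ × ℂ =>
        ((C : ℝ) : ℂ) * ζ.2 / (1 - (α : ℂ) * ζ.1) ^ ((m : ℂ)⁻¹) := rfl
    rw [hfun]
    have hbase : DifferentiableAt ℂ (fun ζ : ℂ × ℂ => 1 - (α : ℂ) * ζ.1) ζ :=
      (differentiableAt_const _).sub ((differentiableAt_const _).mul differentiableAt_fst)
    have hslit : (1 - (α : ℂ) * ζ.1) ∈ Complex.slitPlane :=
      Complex.mem_slitPlane_iff.mpr (Or.inl (hre ζ.1 h))
    have hden : DifferentiableAt ℂ (fun ζ : ℂ × ℂ => (1 - (α : ℂ) * ζ.1) ^ ((m : ℂ)⁻¹)) ζ :=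
      hbase.cpow (differentiableAt_const _) hslit
    have hden0 : (1 - (α : ℂ) * ζ.1) ^ ((m : ℂ)⁻¹) ≠ 0 := by
      rw [Ne, Complex.cpow_eq_zero_iff]
      rintro ⟨h0, -⟩
      exact hb0 ζ.1 h h0
    have hre2 : (fun ζ : ℂ × ℂ => ((C : ℝ) : ℂ) * ζ.2 / (1 - (α : ℂ) * ζ.1) ^ ((m : ℂ)⁻¹))
        = fun ζ : ℂ × ℂ => ((C : ℝ) : ℂ) * ζ.2 * ((1 - (α : ℂ) * ζ.1) ^ ((m : ℂ)⁻¹))⁻¹ := by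
      funext ζ; rw [div_eq_mul_inv]
    rw [hre2]
    exact ((differentiableAt_const _).mul differentiableAt_snd).mul (hden.inv hden0)
  have hdiff : DifferentiableOn ℂ (tangCand K m α) (ellipsoidK K m) :=
    fun ζ hζ => (hdiffAt ζ (hz1lt ζ hζ)).differentiableWithinAt
  -- the base point is in E
  have hzE : ((α : ℂ), 0) ∈ ellipsoidK K m := by
    show ‖(α : ℂ)‖ ^ 2 + K * ‖(0 : ℂ)‖ ^ (2 * m) < 1
    rw [Complex.norm_real, Real.norm_eq_abs, sq_abs, norm_zero, zero_pow h2m0, mul_zero, add_zero]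
    exact hα2'
  have hEopen : IsOpen (ellipsoidK K m) := by
    have hcont : Continuous fun p : ℂ × ℂ =>
        ‖p.1‖ ^ 2 + K * ‖p.2‖ ^ (2 * m) :=
      ((continuous_norm.comp continuous_fst).pow 2).add
        (continuous_const.mul ((continuous_norm.comp continuous_snd).pow (2 * m)))
    exact isOpen_lt hcont continuous_const
  -- ψ(z) = 0
  have hψz : tangCand K m α ((α : ℂ), 0) = 0 := by
    simp [tangCand]
  -- the derivative at z in the direction (0,1)
  have hα01 : ‖(α : ℂ)‖ < 1 := by
    rw [Complex.norm_real, Real.norm_eq_abs]; exact abs_lt.mpr ⟨hα1, hα2⟩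
  have hι : HasDerivAt (fun t : ℂ => (((α : ℂ)), t)) ((0 : ℂ), (1 : ℂ)) 0 :=
    (hasDerivAt_const 0 _).prodMk (hasDerivAt_id 0)
  set w : ℂ := (1 - (α : ℂ) * (α : ℂ)) ^ ((m : ℂ)⁻¹) with hwdef
  have hwre : (1 - (α : ℂ) * (α : ℂ)) = (((1 - α ^ 2 : ℝ)) : ℂ) := by push_cast; ring
  have hw : w = ((((1 - α ^ 2) ^ ((m : ℝ)⁻¹) : ℝ)) : ℂ) := by
    rw [hwdef, hwre, hmc, Complex.ofReal_cpow h1a.le]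
  have hcomp : HasDerivAt (fun t : ℂ => tangCand K m α ((α : ℂ), t))
      (fderiv ℂ (tangCand K m α) ((α : ℂ), 0) (0, 1)) 0 :=
    (hdiffAt ((α : ℂ), 0) hα01).hasFDerivAt.comp_hasDerivAt 0 hι
  have hsimple : HasDerivAt (fun t : ℂ => ((C : ℝ) : ℂ) * t / w) (((C : ℝ) : ℂ) / w) 0 := by
    simpa using ((hasDerivAt_id (0 : ℂ)).const_mul ((C : ℝ) : ℂ)).div_const w
  have hfun2 : (fun t : ℂ => tangCand K m α ((α : ℂ), t))
      = fun t : ℂ => ((C : ℝ) : ℂ) * t / w := rfl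
  rw [hfun2] at hcomp
  have hfd : fderiv ℂ (tangCand K m α) ((α : ℂ), 0) (0, 1) = ((C : ℝ) : ℂ) / w :=
    hcomp.unique hsimple
  have hfdabs : ‖fderiv ℂ (tangCand K m α) ((α : ℂ), 0) (0, 1)‖
      = C / (1 - α ^ 2) ^ ((m : ℝ)⁻¹) := by
    rw [hfd, hw, ← Complex.ofReal_div, Complex.norm_real, Real.norm_eq_abs,
      abs_of_pos (div_pos hCpos (Real.rpow_pos_of_pos h1a _))]
  refine ⟨hmaps, hdiff, hψz, hfdabs, ?_⟩
  -- lower bound for the Carathéodory metric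
  set r : ℝ := ((1 - α ^ 2) / K) ^ ((2 * (m : ℝ))⁻¹) with hrdef
  have hrpos : 0 < r := Real.rpow_pos_of_pos (div_pos h1a hK) _
  have hr2m : r ^ (2 * m) = (1 - α ^ 2) / K := key _ (div_pos h1a hK).le
  have hιmaps : MapsTo (fun t : ℂ => (((α : ℂ)), t)) (ball 0 r) (ellipsoidK K m) := by
    intro t ht
    rw [mem_ball_zero_iff] at ht
    have h1 : ‖t‖ ^ (2 * m) < r ^ (2 * m) :=
      pow_lt_pow_left₀ ht (norm_nonneg t) h2m0
    rw [hr2m] at h1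
    show ‖(α : ℂ)‖ ^ 2 + K * ‖t‖ ^ (2 * m) < 1
    rw [Complex.norm_real, Real.norm_eq_abs, sq_abs]
    have h2 : K * ‖t‖ ^ (2 * m) < 1 - α ^ 2 := by
      rw [lt_div_iff₀ hK] at h1; linarith [h1]
    linarith
  have hbdd : BddAbove {c : ℝ | ∃ g : ℂ × ℂ → ℂ,
      DifferentiableOn ℂ g (ellipsoidK K m) ∧ MapsTo g (ellipsoidK K m) unitDisc ∧
      g ((α : ℂ), 0) = 0 ∧
      c = ‖fderiv ℂ g ((α : ℂ), 0) (0, 1)‖} := by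
    refine ⟨1 / r, ?_⟩
    rintro x ⟨g, hg, hgm, hg0, rfl⟩
    have hιdiff : DifferentiableOn ℂ (fun t : ℂ => (((α : ℂ)), t)) (ball 0 r) :=
      ((differentiable_const _).prodMk differentiable_id).differentiableOn
    have hh : DifferentiableOn ℂ (fun t : ℂ => g ((α : ℂ), t)) (ball 0 r) :=
      hg.comp hιdiff hιmaps
    have hh0 : (fun t : ℂ => g ((α : ℂ), t)) 0 = 0 := hg0
    have hhmaps : MapsTo (fun t : ℂ => g ((α : ℂ), t)) (ball 0 r)
        (ball ((fun t : ℂ => g ((α : ℂ), t)) 0) 1) := by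
      intro t ht
      rw [hh0]
      exact hgm (hιmaps ht)
    have hschwarz := Complex.norm_deriv_le_div_of_mapsTo_ball hh (hhmaps.mono_right ball_subset_closedBall) hrpos
    have hgz : DifferentiableAt ℂ g ((α : ℂ), 0) :=
      (hg _ hzE).differentiableAt (hEopen.mem_nhds hzE)
    have hcomp2 : HasDerivAt (fun t : ℂ => g ((α : ℂ), t))
        (fderiv ℂ g ((α : ℂ), 0) (0, 1)) 0 :=
      hgz.hasFDerivAt.comp_hasDerivAt 0 hι
    rw [hcomp2.deriv] at hschwarz
    exact hschwarz
  have hmem : C / (1 - α ^ 2) ^ ((m : ℝ)⁻¹) ∈ {c : ℝ | ∃ g : ℂ × ℂ → ℂ,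
      DifferentiableOn ℂ g (ellipsoidK K m) ∧ MapsTo g (ellipsoidK K m) unitDisc ∧
      g ((α : ℂ), 0) = 0 ∧
      c = ‖fderiv ℂ g ((α : ℂ), 0) (0, 1)‖} :=
    ⟨tangCand K m α, hdiff, hmaps, hψz, hfdabs.symm⟩
  have hdef : caraMetric2 (ellipsoidK K m) ((α : ℂ), 0) (0, 1) = sSup {c : ℝ | ∃ g : ℂ × ℂ → ℂ,
      DifferentiableOn ℂ g (ellipsoidK K m) ∧ MapsTo g (ellipsoidK K m) unitDisc ∧
      g ((α : ℂ), 0) = 0 ∧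
      c = ‖fderiv ℂ g ((α : ℂ), 0) (0, 1)‖} := rfl
  rw [hdef]
  exact le_csSup hbdd hmem
end
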